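/- The weighted pairing ⟨⟨K, A⟩⟩_σ̄ = Tr(Kᵀ Ω^σ̄ A) between skew-symmetric matrices K and Ω^σ̄-antisymmetric row-null matrices A vanishes whenever K = dF is a discrete exact one-form: Tr((dF)ᵀ Ω^σ̄ A) = 0 for all F ∈ ℝ^N and all A with A𝟙 = 0 and AᵀΩ^σ̄ + Ω^σ̄A = 0. -/
import Mathlib


open Matrix

/-- The discrete exterior derivative of a discrete function `F ∈ ℝ^N`:
the matrix with entries `(dF)_{ij} = F_i − F_j`. -/
def dMat {N : ℕ} (F : Fin N → ℝ) : Matrix (Fin N) (Fin N) ℝ :=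
  Matrix.of fun i j => F i - F j

/-- The weighted pairing `⟨⟨K, A⟩⟩_σ̄ = Tr(Kᵀ Ω^σ̄ A)` vanishes on exact discrete
one-forms `K = dF`, for every `A` with `A𝟙 = 0` and `AᵀΩ^σ̄ + Ω^σ̄A = 0`. -/
theorem pairing_exact_vanishes {N : ℕ} (d : Fin N → ℝ) (hd : ∀ i, 0 < d i)
    (A : Matrix (Fin N) (Fin N) ℝ)
    (hA1 : A *ᵥ (fun _ => 1) = 0)
    (hA2 : Aᵀ * Matrix.diagonal d + Matrix.diagonal d * A = 0)
    (F : Fin N → ℝ) :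
    Matrix.trace ((dMat F)ᵀ * Matrix.diagonal d * A) = 0 := by
  have hrow : ∀ i, ∑ j, A i j = 0 := by
    intro i
    have := congrFun hA1 i
    simpa [Matrix.mulVec, dotProduct] using this
  have hanti : ∀ i j, d i * A i j = -(A j i * d j) := by
    intro i j
    have := congrFun (congrFun hA2 i) j
    rw [Matrix.add_apply, Matrix.mul_diagonal, Matrix.diagonal_mul,
      Matrix.transpose_apply, Matrix.zero_apply] at this
    linarith
  have htr : Matrix.trace ((dMat F)ᵀ * Matrix.diagonal d * A)
      = ∑ i, ∑ j, (F j - F i) * (d j * A j i) := by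
    rw [Matrix.mul_assoc, Matrix.trace]
    refine Finset.sum_congr rfl fun i _ => ?_
    rw [Matrix.diag_apply, Matrix.mul_apply]
    refine Finset.sum_congr rfl fun j _ => ?_
    rw [Matrix.diagonal_mul, Matrix.transpose_apply]
    rfl
  rw [htr]
  have h1 : ∑ i, ∑ j, F j * (d j * A j i) = 0 := by
    rw [Finset.sum_comm]
    refine Finset.sum_eq_zero fun j _ => ?_
    have : ∑ i, F j * (d j * A j i) = F j * d j * ∑ i, A j i := by
      rw [Finset.mul_sum]; ring_nf
    rw [this, hrow, mul_zero]
  have h2 : ∑ i, ∑ j, F i * (d j * A j i) = 0 := by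
    refine Finset.sum_eq_zero fun i _ => ?_
    have : ∑ j, F i * (d j * A j i) = ∑ j, F i * -(A i j * d i) := by
      refine Finset.sum_congr rfl fun j _ => ?_
      rw [hanti j i]
    rw [this]
    have : ∑ j, F i * -(A i j * d i) = -(F i * d i) * ∑ j, A i j := by
      rw [Finset.mul_sum]; exact Finset.sum_congr rfl fun _ _ => by ring
    rw [this, hrow, mul_zero]
  calc ∑ i, ∑ j, (F j - F i) * (d j * A j i)
      = ∑ i, ∑ j, (F j * (d j * A j i) - F i * (d j * A j i)) := by
        refine Finset.sum_congr rfl fun i _ => Finset.sum_congr rfl fun j _ => ?_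
        ring
    _ = (∑ i, ∑ j, F j * (d j * A j i)) - ∑ i, ∑ j, F i * (d j * A j i) := by
        simp [Finset.sum_sub_distrib]
    _ = 0 := by rw [h1, h2, sub_zero]
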